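/- The success probability of the Bayes-type classifier Γ^B admits the representation ℙ{Γ^B(X^(δ)) = Y} = Σ_{k=1}^M 𝔼[ max{ 𝔼(Y·ℙ{δ=k | X^(k), Y} | X^(k)), 𝔼((1−Y)·ℙ{δ=k | X^(k), Y} | X^(k)) } ], where ℙ{δ=k | X^(k), Y} := 𝔼[1{δ=k} | σ(X^(k), Y)]. -/

import Mathlib

open MeasureTheory ProbabilityTheory Filter

noncomputable section

/-- The sequence space `ℓ₂` of square-summable real sequences. -/
abbrev ell2 : Type := lp (fun _ : ℕ => ℝ) 2

noncomputable instance : MeasurableSpace ell2 := borel _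
instance : BorelSpace ell2 := ⟨rfl⟩

/-! On `{δ = k}` the classifier is correct with weight `c = Y` where `φ_k > 0` and `c = 1 - Y`
elsewhere. As `c` is `σ(X^(k), Y)`-measurable, `𝔼[c · 1{δ=k}] = 𝔼[c · r_k]`; as `{φ_k > 0}` is
`σ(X^(k))`-measurable, conditioning on `X^(k)` then replaces `Y r_k` and `(1 - Y) r_k` by `A_k`
and `B_k`. The tower property gives `φ_k = A_k - B_k` a.e., so the weight selects `max(A_k, B_k)`. -/

section CondExp

variable {Ω : Type*} {m m' m₀ : MeasurableSpace Ω} {μ : Measure Ω} [IsFiniteMeasure μ]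
  {f g : Ω → ℝ}

theorem integral_mul_condExp_of_stronglyMeasurable (hm : m ≤ m₀) {C : ℝ}
    (hg : StronglyMeasurable[m] g) (hgC : ∀ᵐ ω ∂μ, ‖g ω‖ ≤ C) (hf : Integrable f μ) :
    ∫ ω, g ω * μ[f|m] ω ∂μ = ∫ ω, g ω * f ω ∂μ := by
  have hgf : Integrable (g * f) μ := hf.bdd_mul (hg.mono hm).aestronglyMeasurable hgC
  calc ∫ ω, g ω * μ[f|m] ω ∂μ = ∫ ω, μ[g * f|m] ω ∂μ :=
        integral_congr_ae (condExp_mul_of_stronglyMeasurable_left hg hgf hf).symm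
    _ = ∫ ω, g ω * f ω ∂μ := integral_condExp hm

theorem integral_piecewise_condExp (hm : m ≤ m₀) {s : Set Ω} [DecidablePred (· ∈ s)]
    (hs : MeasurableSet[m] s) (hf : Integrable f μ) (hg : Integrable g μ) :
    ∫ ω, s.piecewise (μ[f|m]) (μ[g|m]) ω ∂μ = ∫ ω, s.piecewise f g ω ∂μ := by
  rw [integral_piecewise (hm s hs) integrable_condExp.integrableOn integrable_condExp.integrableOn,
    integral_piecewise (hm s hs) hf.integrableOn hg.integrableOn, setIntegral_condExp hm hf hs,
    setIntegral_condExp hm hg hs.compl]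

theorem condExp_mul_condExp_of_le (hmm' : m ≤ m') (hm' : m' ≤ m₀) {C : ℝ}
    (hg : StronglyMeasurable[m'] g) (hgC : ∀ᵐ ω ∂μ, ‖g ω‖ ≤ C) (hf : Integrable f μ) :
    μ[g * μ[f|m'] | m] =ᵐ[μ] μ[g * f | m] :=
  (condExp_congr_ae (condExp_mul_of_stronglyMeasurable_left hg
      (hf.bdd_mul (hg.mono hm').aestronglyMeasurable hgC) hf).symm).trans
    (condExp_condExp_of_le hmm' hm')

end CondExp

theorem norm_le_one_of_mem_Icc_zero_one {y : ℝ} (hy : y ∈ Set.Icc (0 : ℝ) 1) :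
    ‖y‖ ≤ 1 ∧ ‖1 - y‖ ≤ 1 ∧ ‖2 * y - 1‖ ≤ 1 := by
  simp only [Real.norm_eq_abs, abs_le]
  refine ⟨⟨?_, ?_⟩, ⟨?_, ?_⟩, ⟨?_, ?_⟩⟩ <;> linarith [hy.1, hy.2]

theorem norm_ite_le_one_of_mem_Icc_zero_one {p : Prop} [Decidable p] {y : ℝ}
    (hy : y ∈ Set.Icc (0 : ℝ) 1) : ‖if p then y else 1 - y‖ ≤ 1 := by
  split_ifs
  exacts [(norm_le_one_of_mem_Icc_zero_one hy).1, (norm_le_one_of_mem_Icc_zero_one hy).2.1]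

section WeightedCondExp

variable {Ω : Type*} {m m' m₀ : MeasurableSpace Ω} {μ : Measure Ω} [IsFiniteMeasure μ]
  {Y f : Ω → ℝ}

theorem condExp_two_mul_sub_one_mul_ae_eq_sub (hmm' : m ≤ m') (hm' : m' ≤ m₀)
    (hY : StronglyMeasurable[m'] Y) (hY01 : ∀ᵐ ω ∂μ, Y ω ∈ Set.Icc (0 : ℝ) 1)
    (hf : Integrable f μ) :
    μ[fun ω => (2 * Y ω - 1) * f ω | m] =ᵐ[μ]
      μ[fun ω => Y ω * μ[f|m'] ω | m] - μ[fun ω => (1 - Y ω) * μ[f|m'] ω | m] := by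
  have hYb := hY01.mono fun _ hω => norm_le_one_of_mem_Icc_zero_one hω
  have hYr : Integrable (fun ω => Y ω * μ[f|m'] ω) μ :=
    integrable_condExp.bdd_mul (hY.mono hm').aestronglyMeasurable (hYb.mono fun _ h => h.1)
  have h1Yr : Integrable (fun ω => (1 - Y ω) * μ[f|m'] ω) μ :=
    integrable_condExp.bdd_mul ((stronglyMeasurable_const.sub hY).mono hm').aestronglyMeasurable
      (hYb.mono fun _ h => h.2.1)
  have hsplit : (fun ω => Y ω * μ[f|m'] ω) - (fun ω => (1 - Y ω) * μ[f|m'] ω)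
      = (fun ω => 2 * Y ω - 1) * μ[f|m'] := by
    funext ω; simp only [Pi.sub_apply, Pi.mul_apply]; ring
  refine (condExp_mul_condExp_of_le (g := fun ω => 2 * Y ω - 1) hmm' hm'
    ((stronglyMeasurable_const.mul hY).sub stronglyMeasurable_const) (hYb.mono fun _ h => h.2.2)
    hf).symm.trans ?_
  rw [← hsplit]
  exact condExp_sub hYr h1Yr m

theorem integral_ite_pos_condExp_mul_eq_integral_max (hmm' : m ≤ m') (hm' : m' ≤ m₀)
    (hY : StronglyMeasurable[m'] Y) (hY01 : ∀ᵐ ω ∂μ, Y ω ∈ Set.Icc (0 : ℝ) 1)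
    (hf : Integrable f μ) :
    ∫ ω, (if 0 < μ[fun ω => (2 * Y ω - 1) * f ω | m] ω then Y ω else 1 - Y ω) * f ω ∂μ
      = ∫ ω, max (μ[fun ω => Y ω * μ[f|m'] ω | m] ω)
          (μ[fun ω => (1 - Y ω) * μ[f|m'] ω | m] ω) ∂μ := by
  classical
  set φ := μ[fun ω => (2 * Y ω - 1) * f ω | m]
  set r := μ[f|m']
  set A := μ[fun ω => Y ω * r ω | m]
  set B := μ[fun ω => (1 - Y ω) * r ω | m]
  have hφ : φ =ᵐ[μ] A - B := condExp_two_mul_sub_one_mul_ae_eq_sub hmm' hm' hY hY01 hf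
  have hYb := hY01.mono fun _ hω => norm_le_one_of_mem_Icc_zero_one hω
  have hs : MeasurableSet[m] {ω | 0 < φ ω} :=
    measurableSet_lt measurable_const stronglyMeasurable_condExp.measurable
  have hc : StronglyMeasurable[m'] fun ω => if 0 < φ ω then Y ω else 1 - Y ω :=
    (Measurable.ite (hmm' _ hs) hY.measurable
      (measurable_const.sub hY.measurable)).stronglyMeasurable
  have hYr : Integrable (fun ω => Y ω * r ω) μ :=
    integrable_condExp.bdd_mul (hY.mono hm').aestronglyMeasurable (hYb.mono fun _ h => h.1)
  have h1Yr : Integrable (fun ω => (1 - Y ω) * r ω) μ :=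
    integrable_condExp.bdd_mul ((stronglyMeasurable_const.sub hY).mono hm').aestronglyMeasurable
      (hYb.mono fun _ h => h.2.1)
  calc ∫ ω, (if 0 < φ ω then Y ω else 1 - Y ω) * f ω ∂μ
      = ∫ ω, (if 0 < φ ω then Y ω else 1 - Y ω) * r ω ∂μ :=
        (integral_mul_condExp_of_stronglyMeasurable hm' hc
          (hY01.mono fun _ => norm_ite_le_one_of_mem_Icc_zero_one) hf).symm
    _ = ∫ ω, {ω | 0 < φ ω}.piecewise (fun ω => Y ω * r ω) (fun ω => (1 - Y ω) * r ω) ω ∂μ := by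
        congr 1; funext ω; simp only [Set.piecewise, Set.mem_ofPred_eq]; split_ifs <;> rfl
    _ = ∫ ω, {ω | 0 < φ ω}.piecewise A B ω ∂μ :=
        (integral_piecewise_condExp (hmm'.trans hm') hs hYr h1Yr).symm
    _ = _ := by
        refine integral_congr_ae ?_
        filter_upwards [hφ] with ω hω
        simp only [Set.piecewise, Set.mem_ofPred_eq, hω, Pi.sub_apply, sub_pos]
        split_ifs with h
        exacts [(max_eq_left h.le).symm, (max_eq_right (not_lt.mp h)).symm]

end WeightedCondExp

theorem indicator_eq_sum_ite_mul_ite {Ω ι : Type*} [Fintype ι] [DecidableEq ι] (δ : Ω → ι)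
    (φ : ι → Ω → ℝ) {Y : Ω → ℝ} {ω : Ω} (hY : Y ω = 0 ∨ Y ω = 1) :
    {ω | ∑ k, (if δ ω = k then (1 : ℝ) else 0) * (if 0 < φ k ω then (1 : ℝ) else 0) = Y ω}.indicator
        1 ω
      = ∑ k, (if 0 < φ k ω then Y ω else 1 - Y ω) * (if δ ω = k then 1 else 0) := by
  simp only [Finset.sum_boole_mul, Finset.sum_mul_boole, Finset.mem_univ, if_true]
  rcases hY with h | h <;> by_cases hφ : 0 < φ (δ ω) ω <;> simp [Set.indicator, h, hφ]

theorem bayes_success_probability_representation_general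
    {Ω : Type} [MeasurableSpace Ω] (P : Measure Ω) [IsProbabilityMeasure P]
    (M : ℕ)
    (Y : Ω → ℝ) (hYmeas : Measurable Y) (hY01 : ∀ ω, Y ω = 0 ∨ Y ω = 1)
    (δ : Ω → Fin M) (hδ : Measurable δ)
    (X : Fin M → Ω → ell2) (hX : ∀ k, Measurable (X k))
    (φ : Fin M → Ω → ℝ)
    (hφ : ∀ k, φ k =
      P[(fun ω => (2 * Y ω - 1) * (if δ ω = k then (1:ℝ) else 0)) |
        MeasurableSpace.comap (X k) inferInstance])
    -- `r k` is (a version of) the conditional probability `ℙ{δ=k | X^(k), Y}`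
    (r : Fin M → Ω → ℝ)
    (hr : ∀ k, r k =
      P[(fun ω => (if δ ω = k then (1:ℝ) else 0)) |
        MeasurableSpace.comap (fun ω => (X k ω, Y ω)) inferInstance])
    -- `A k` and `B k` are the inner conditional expectations given `σ(X^(k))`
    (A B : Fin M → Ω → ℝ)
    (hA : ∀ k, A k = P[(fun ω => Y ω * r k ω) | MeasurableSpace.comap (X k) inferInstance])
    (hB : ∀ k, B k = P[(fun ω => (1 - Y ω) * r k ω) | MeasurableSpace.comap (X k) inferInstance]) :
    (P {ω | (∑ k, (if δ ω = k then (1:ℝ) else 0) * (if 0 < φ k ω then (1:ℝ) else 0)) = Y ω}).toReal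
      = ∑ k, ∫ ω, max (A k ω) (B k ω) ∂P := by
  have hY : ∀ ω, Y ω ∈ Set.Icc (0 : ℝ) 1 := fun ω => by rcases hY01 ω with h | h <;> simp [h]
  have hmX : ∀ k, MeasurableSpace.comap (X k) inferInstance
      ≤ MeasurableSpace.comap (fun ω => (X k ω, Y ω)) inferInstance :=
    fun k => (measurable_fst.comp (comap_measurable fun ω => (X k ω, Y ω))).comap_le
  have hmXY : ∀ k, MeasurableSpace.comap (fun ω => (X k ω, Y ω)) inferInstance ≤ ‹_› :=
    fun k => ((hX k).prodMk hYmeas).comap_le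
  have hYXY : ∀ k,
      StronglyMeasurable[MeasurableSpace.comap (fun ω => (X k ω, Y ω)) inferInstance] Y :=
    fun k => (measurable_snd.comp (comap_measurable _)).stronglyMeasurable
  have hδk : ∀ k, Measurable fun ω => if δ ω = k then (1 : ℝ) else 0 :=
    fun k => Measurable.ite (hδ (measurableSet_singleton k)) measurable_const measurable_const
  have hI : ∀ k, Integrable (fun ω => if δ ω = k then (1 : ℝ) else 0) P := fun k =>
    (integrable_const (1 : ℝ)).mono' (hδk k).aestronglyMeasurable
      (ae_of_all _ fun ω => by split_ifs <;> simp)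
  have hφk : ∀ k, MeasurableSet {ω | 0 < φ k ω} := fun k =>
    measurableSet_lt measurable_const
      (hφ k ▸ (stronglyMeasurable_condExp.mono ((hmX k).trans (hmXY k))).measurable)
  have hS : MeasurableSet
      {ω | (∑ k, (if δ ω = k then (1:ℝ) else 0) * (if 0 < φ k ω then (1:ℝ) else 0)) = Y ω} :=
    measurableSet_eq_fun (Finset.measurable_sum _ fun k _ =>
      (hδk k).mul (Measurable.ite (hφk k) measurable_const measurable_const)) hYmeas
  calc _ = ∫ ω, ∑ k, (if 0 < φ k ω then Y ω else 1 - Y ω) * (if δ ω = k then 1 else 0) ∂P := by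
        rw [← measureReal_def, ← integral_indicator_one hS]
        exact integral_congr_ae (ae_of_all _ fun ω => indicator_eq_sum_ite_mul_ite δ φ (hY01 ω))
    _ = ∑ k, ∫ ω, (if 0 < φ k ω then Y ω else 1 - Y ω) * (if δ ω = k then 1 else 0) ∂P :=
        integral_finsetSum _ fun k _ => (hI k).bdd_mul
          (Measurable.ite (hφk k) hYmeas (measurable_const.sub hYmeas)).aestronglyMeasurable
          (ae_of_all _ fun ω => norm_ite_le_one_of_mem_Icc_zero_one (hY ω))
    _ = ∑ k, ∫ ω, max (A k ω) (B k ω) ∂P := Finset.sum_congr rfl fun k _ => by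
        rw [hφ k, hA k, hB k, hr k]
        exact integral_ite_pos_condExp_mul_eq_integral_max (hmX k) (hmXY k) (hYXY k)
          (ae_of_all _ hY) (hI k)

/-- The success probability of the Bayes-type classifier `Γ^B` admits the
representation
`ℙ{Γ^B(X^(δ)) = Y} = Σ_k 𝔼[ max{ 𝔼(Y·ℙ{δ=k|X^(k),Y} | X^(k)), 𝔼((1−Y)·ℙ{δ=k|X^(k),Y} | X^(k)) } ]`,
where `ℙ{δ=k | X^(k), Y} = 𝔼[1{δ=k} | σ(X^(k), Y)]`. -/
theorem bayes_success_probability_representation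
    {Ω : Type} [MeasurableSpace Ω] (P : Measure Ω) [IsProbabilityMeasure P]
    (M : ℕ) (hM : 1 ≤ M)
    (Y : Ω → ℝ) (hYmeas : Measurable Y) (hY01 : ∀ ω, Y ω = 0 ∨ Y ω = 1)
    (δ : Ω → Fin M) (hδ : Measurable δ)
    (X : Fin M → Ω → ell2) (hX : ∀ k, Measurable (X k))
    (φ : Fin M → Ω → ℝ)
    (hφ : ∀ k, φ k =
      P[(fun ω => (2 * Y ω - 1) * (if δ ω = k then (1:ℝ) else 0)) |
        MeasurableSpace.comap (X k) inferInstance])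
    -- `r k` is (a version of) the conditional probability `ℙ{δ=k | X^(k), Y}`
    (r : Fin M → Ω → ℝ)
    (hr : ∀ k, r k =
      P[(fun ω => (if δ ω = k then (1:ℝ) else 0)) |
        MeasurableSpace.comap (fun ω => (X k ω, Y ω)) inferInstance])
    -- `A k` and `B k` are the inner conditional expectations given `σ(X^(k))`
    (A B : Fin M → Ω → ℝ)
    (hA : ∀ k, A k = P[(fun ω => Y ω * r k ω) | MeasurableSpace.comap (X k) inferInstance])
    (hB : ∀ k, B k = P[(fun ω => (1 - Y ω) * r k ω) | MeasurableSpace.comap (X k) inferInstance]) :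
    (P {ω | (∑ k, (if δ ω = k then (1:ℝ) else 0) * (if 0 < φ k ω then (1:ℝ) else 0)) = Y ω}).toReal
      = ∑ k, ∫ ω, max (A k ω) (B k ω) ∂P :=
  bayes_success_probability_representation_general P M Y hYmeas hY01 δ hδ X hX φ hφ r hr A B hA hB
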